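/- Let L be a Lie algebroid over R with L free of finite rank over R. The comultiplication Δ on U_R(L), determined by Δ(r) = r⊗_R 1 for r ∈ R, Δ(l) = l⊗_R 1 + 1⊗_R l for l ∈ L, and multiplicativity Δ(DE) = D_{(1)}E_{(1)} ⊗ D_{(2)}E_{(2)}, is coassociative and counital with counit ε(D) = D(1) (the action of D on 1 ∈ R). -/

import Mathlib

/-!
Left multiplication by `l ∈ L` and the anchor `ρ l` satisfy the same Leibniz rule
`f (r • m) = r • f m + (ρ l r) • m`, and for two such operators `f ⊗ 1 + 1 ⊗ g` is well
defined on a tensor product over `R`. Since `U_R(L)` is generated from `1` by left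
multiplications by `R` and `L`, two `R`-linear maps out of it that agree at `1` and both turn
left multiplication by each `l` into the same operator are equal. Both sides of
coassociativity turn it into `l ⊗ 1 ⊗ 1 + 1 ⊗ l ⊗ 1 + 1 ⊗ 1 ⊗ l`, and both sides of the counit
laws into left multiplication by `l`, because `ε (l D) = ρ l (ε D)`.
-/

open TensorProduct

/-- Defining relations of `U_R(L)` (see STATEMENT 3). -/
inductive URel (k R L : Type*) [CommRing k] [CommRing R] [Algebra k R]
    [LieRing L] [LieAlgebra k L] [Module R L] (ρ : L → Derivation k R R) :
    FreeAlgebra k (R × L) → FreeAlgebra k (R × L) → Prop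
  | add (x y : R × L) :
      URel k R L ρ (FreeAlgebra.ι k (x + y)) (FreeAlgebra.ι k x + FreeAlgebra.ι k y)
  | smul (c : k) (x : R × L) :
      URel k R L ρ (FreeAlgebra.ι k (c • x)) (c • FreeAlgebra.ι k x)
  | lie (x y : R × L) :
      URel k R L ρ (FreeAlgebra.ι k x * FreeAlgebra.ι k y - FreeAlgebra.ι k y * FreeAlgebra.ι k x)
        (FreeAlgebra.ι k ((ρ x.2 y.1 - ρ y.2 x.1, ⁅x.2, y.2⁆) : R × L))
  | central (r : R) (x : R × L) :
      URel k R L ρ (FreeAlgebra.ι k ((r, 0) : R × L) * FreeAlgebra.ι k x)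
        (FreeAlgebra.ι k ((r * x.1, r • x.2) : R × L))
  | one : URel k R L ρ (FreeAlgebra.ι k ((1, 0) : R × L)) 1

variable (k R L : Type*) [Field k] [CharZero k] [CommRing R] [Algebra k R]
  [LieRing L] [LieAlgebra k L] [Module R L] (ρ : L → Derivation k R R)

/-- The universal enveloping algebra `U_R(L)` of the Lie algebroid `L`. -/
abbrev UEnv := RingQuot (URel k R L ρ)

/-- The class of a generator `(r, l) ∈ R ⊕ L` in `U_R(L)`. -/
noncomputable def uGen (x : R × L) : UEnv k R L ρ :=
  RingQuot.mkAlgHom k (URel k R L ρ) (FreeAlgebra.ι k x)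

section Leibniz

variable {A M N P M' N' : Type*} [CommRing A]
  [AddCommGroup M] [Module A M] [AddCommGroup N] [Module A N] [AddCommGroup P] [Module A P]
  [AddCommGroup M'] [Module A M'] [AddCommGroup N'] [Module A N']

def IsDerivationAlong (D : A → A) (f : M →+ M) : Prop :=
  ∀ (a : A) (m : M), f (a • m) = a • f m + D a • m

variable {D : A → A}

theorem Derivation.isDerivationAlong {k : Type*} [CommRing k] [Algebra k A]
    (d : Derivation k A A) :
    IsDerivationAlong d d.toLinearMap.toAddMonoidHom := by
  intro a b
  simp only [LinearMap.toAddMonoidHom_coe, Derivation.coeFn_coe, smul_eq_mul, Derivation.leibniz]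
  ring

/-- The operator `f ⊗ 1 + 1 ⊗ g`, well defined on `M ⊗[A] N` because `f` and `g` fail to be
`A`-linear by the same term `D a`. -/
def leibnizTensor (f : M →+ M) (g : N →+ N) (hf : IsDerivationAlong D f)
    (hg : IsDerivationAlong D g) : M ⊗[A] N →+ M ⊗[A] N :=
  liftAddHom
    (AddMonoidHom.mk'
      (fun m => (mk A M N (f m)).toAddMonoidHom + (mk A M N m).toAddMonoidHom.comp g)
      fun m m' => by
        ext n
        simp only [map_add, AddMonoidHom.add_apply, LinearMap.toAddMonoidHom_coe,
          LinearMap.add_apply, AddMonoidHom.coe_comp, Function.comp_apply, mk_apply]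
        abel)
    fun a m n => by
      simp only [AddMonoidHom.mk'_apply, AddMonoidHom.add_apply, LinearMap.toAddMonoidHom_coe,
        AddMonoidHom.coe_comp, Function.comp_apply, mk_apply, hf a m, hg a n, add_tmul, tmul_add,
        smul_tmul]
      abel

variable {f : M →+ M} {g : N →+ N} {h : P →+ P}
  (hf : IsDerivationAlong D f) (hg : IsDerivationAlong D g) (hh : IsDerivationAlong D h)

@[simp]
theorem leibnizTensor_tmul (m : M) (n : N) :
    leibnizTensor f g hf hg (m ⊗ₜ n) = f m ⊗ₜ n + m ⊗ₜ g n := by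
  simp [leibnizTensor]

theorem eq_leibnizTensor {δ : M ⊗[A] N → M ⊗[A] N} (hadd : ∀ x y, δ (x + y) = δ x + δ y)
    (htmul : ∀ m n, δ (m ⊗ₜ n) = f m ⊗ₜ n + m ⊗ₜ g n) (t : M ⊗[A] N) :
    δ t = leibnizTensor f g hf hg t := by
  induction t using TensorProduct.induction_on with
  | zero => simpa using hadd 0 0
  | tmul m n => simp [htmul]
  | add x y hx hy => rw [hadd, hx, hy, map_add]

theorem isDerivationAlong_leibnizTensor : IsDerivationAlong D (leibnizTensor f g hf hg) := by
  intro a t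
  induction t using TensorProduct.induction_on with
  | zero => simp
  | tmul m n =>
    rw [smul_tmul', leibnizTensor_tmul, leibnizTensor_tmul, hf]
    simp only [add_tmul, smul_add, smul_tmul']
    abel
  | add x y hx hy => simp only [smul_add, map_add, hx, hy]; abel

theorem map_leibnizTensor {f' : M' →+ M'} {g' : N' →+ N'} (hf' : IsDerivationAlong D f')
    (hg' : IsDerivationAlong D g') {φ : M →ₗ[A] M'} {ψ : N →ₗ[A] N'}
    (hφ : ∀ m, φ (f m) = f' (φ m)) (hψ : ∀ n, ψ (g n) = g' (ψ n)) (t : M ⊗[A] N) :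
    map φ ψ (leibnizTensor f g hf hg t) = leibnizTensor f' g' hf' hg' (map φ ψ t) := by
  induction t using TensorProduct.induction_on with
  | zero => simp
  | tmul m n => simp [hφ, hψ]
  | add x y hx hy => simp only [map_add, hx, hy]

theorem assoc_leibnizTensor (t : (M ⊗[A] N) ⊗[A] P) :
    TensorProduct.assoc A M N P
        (leibnizTensor (leibnizTensor f g hf hg) h (isDerivationAlong_leibnizTensor hf hg) hh t) =
      leibnizTensor f (leibnizTensor g h hg hh) hf (isDerivationAlong_leibnizTensor hg hh)
        (TensorProduct.assoc A M N P t) := by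
  induction t using TensorProduct.induction_on with
  | zero => simp
  | tmul s p =>
    induction s using TensorProduct.induction_on with
    | zero => simp
    | tmul m n => simp [add_tmul, tmul_add, add_assoc]
    | add x y hx hy => simp only [add_tmul, map_add, hx, hy]
  | add x y hx hy => simp only [map_add, hx, hy]

theorem lid_leibnizTensor {d : A →+ A} {g : N →+ N} (hd : IsDerivationAlong d d)
    (hg : IsDerivationAlong d g) (t : A ⊗[A] N) :
    TensorProduct.lid A N (leibnizTensor d g hd hg t) = g (TensorProduct.lid A N t) := by
  induction t using TensorProduct.induction_on with
  | zero => simp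
  | tmul a n => simp [hg a n, add_comm]
  | add x y hx hy => simp only [map_add, hx, hy]

theorem rid_leibnizTensor {d : A →+ A} {f : M →+ M} (hd : IsDerivationAlong d d)
    (hf : IsDerivationAlong d f) (t : M ⊗[A] A) :
    TensorProduct.rid A M (leibnizTensor f d hf hd t) = f (TensorProduct.rid A M t) := by
  induction t using TensorProduct.induction_on with
  | zero => simp
  | tmul m a => simp [hf a m]
  | add x y hx hy => simp only [map_add, hx, hy]

end Leibniz

section UEnv

variable {k R L : Type*} [Field k] [CommRing R] [Algebra k R] [LieRing L] [LieAlgebra k L]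
  [Module R L] {ρ : L → Derivation k R R}

theorem uGen_add (x y : R × L) : uGen k R L ρ (x + y) = uGen k R L ρ x + uGen k R L ρ y := by
  simpa [uGen] using RingQuot.mkAlgHom_rel k (URel.add (ρ := ρ) x y)

theorem uGen_one : uGen k R L ρ (1, 0) = 1 := by
  simpa [uGen] using RingQuot.mkAlgHom_rel k (URel.one (k := k) (ρ := ρ))

theorem uGen_algebraMap (c : k) :
    uGen k R L ρ (algebraMap k R c, 0) = algebraMap k (UEnv k R L ρ) c := by
  have h := RingQuot.mkAlgHom_rel k (URel.smul (ρ := ρ) c ((1 : R), (0 : L)))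
  rw [Prod.smul_mk, smul_zero, Algebra.smul_def, mul_one] at h
  rw [Algebra.algebraMap_eq_smul_one (A := UEnv k R L ρ), ← uGen_one]
  simpa [uGen] using h

theorem uGen_anchor_commutator (l : L) (r : R) :
    uGen k R L ρ (0, l) * uGen k R L ρ (r, 0) =
      uGen k R L ρ (r, 0) * uGen k R L ρ (0, l) + uGen k R L ρ (ρ l r, 0) := by
  have h := RingQuot.mkAlgHom_rel k (URel.lie (ρ := ρ) ((0 : R), l) (r, (0 : L)))
  simp only [map_sub, map_mul, map_zero, sub_zero, lie_zero] at h
  rw [← sub_eq_iff_eq_add']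
  exact h

theorem UEnv.induction_on {motive : UEnv k R L ρ → Prop} (u : UEnv k R L ρ) (one : motive 1)
    (add : ∀ u v, motive u → motive v → motive (u + v))
    (mul_ring : ∀ (r : R) (u), motive u → motive (uGen k R L ρ (r, 0) * u))
    (mul_lie : ∀ (l : L) (u), motive u → motive (uGen k R L ρ (0, l) * u)) : motive u := by
  suffices h : ∀ a u, motive u → motive (RingQuot.mkAlgHom k (URel k R L ρ) a * u) by
    obtain ⟨a, rfl⟩ := RingQuot.mkAlgHom_surjective k (URel k R L ρ) u
    simpa using h a 1 one
  intro a
  induction a using FreeAlgebra.induction with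
  | grade0 c =>
    intro u hu
    rw [AlgHom.commutes, ← uGen_algebraMap]
    exact mul_ring _ u hu
  | grade1 x =>
    intro u hu
    have hx : uGen k R L ρ x = uGen k R L ρ (x.1, 0) + uGen k R L ρ (0, x.2) := by
      rw [← uGen_add, Prod.mk_add_mk, add_zero, zero_add]
    change motive (uGen k R L ρ x * u)
    rw [hx, add_mul]
    exact add _ _ (mul_ring _ u hu) (mul_lie _ u hu)
  | mul a b ha hb =>
    intro u hu
    rw [map_mul, mul_assoc]
    exact ha _ (hb u hu)
  | add a b ha hb =>
    intro u hu
    rw [map_add, add_mul]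
    exact add _ _ (ha u hu) (hb u hu)

variable [Module R (UEnv k R L ρ)]

theorem uGen_mul_smul (hsmul : ∀ (r : R) (u : UEnv k R L ρ), r • u = uGen k R L ρ (r, 0) * u)
    (l : L) (r : R) (u : UEnv k R L ρ) :
    uGen k R L ρ (0, l) * (r • u) = r • (uGen k R L ρ (0, l) * u) + ρ l r • u := by
  rw [hsmul r u, ← mul_assoc, uGen_anchor_commutator, add_mul, mul_assoc, ← hsmul, ← hsmul]

theorem isDerivationAlong_mulLeft_uGen
    (hsmul : ∀ (r : R) (u : UEnv k R L ρ), r • u = uGen k R L ρ (r, 0) * u) (l : L) :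
    IsDerivationAlong (ρ l) (AddMonoidHom.mulLeft (uGen k R L ρ (0, l))) :=
  uGen_mul_smul hsmul l

theorem UEnv.linearMap_ext {W : Type*} [AddCommGroup W] [Module R W]
    (hsmul : ∀ (r : R) (u : UEnv k R L ρ), r • u = uGen k R L ρ (r, 0) * u)
    {F G : UEnv k R L ρ →ₗ[R] W} (T : L → W → W) (h1 : F 1 = G 1)
    (hF : ∀ l u, F (uGen k R L ρ (0, l) * u) = T l (F u))
    (hG : ∀ l u, G (uGen k R L ρ (0, l) * u) = T l (G u)) : F = G := by
  ext u
  induction u using UEnv.induction_on with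
  | one => exact h1
  | add u v hu hv => rw [map_add, map_add, hu, hv]
  | mul_ring r u hu => rw [← hsmul, map_smul, map_smul, hu]
  | mul_lie l u hu => rw [hF, hG, hu]

noncomputable def UEnv.coderivation
    (hsmul : ∀ (r : R) (u : UEnv k R L ρ), r • u = uGen k R L ρ (r, 0) * u) (l : L) :
    UEnv k R L ρ ⊗[R] UEnv k R L ρ →+ UEnv k R L ρ ⊗[R] UEnv k R L ρ :=
  leibnizTensor _ _ (isDerivationAlong_mulLeft_uGen hsmul l)
    (isDerivationAlong_mulLeft_uGen hsmul l)

end UEnv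

section Coalgebra

variable {k R L : Type*} [Field k] [CommRing R] [Algebra k R] [LieRing L] [LieAlgebra k L]
  [Module R L] {ρ : L → Derivation k R R} [Module R (UEnv k R L ρ)]
  {hsmul : ∀ (r : R) (u : UEnv k R L ρ), r • u = uGen k R L ρ (r, 0) * u}
  {Δ : UEnv k R L ρ →ₗ[R] UEnv k R L ρ ⊗[R] UEnv k R L ρ}

theorem UEnv.coassoc (hΔ1 : Δ 1 = 1 ⊗ₜ 1)
    (hΔ : ∀ l u, Δ (uGen k R L ρ (0, l) * u) = UEnv.coderivation hsmul l (Δ u)) :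
    (TensorProduct.assoc R _ _ _).toLinearMap ∘ₗ map Δ LinearMap.id ∘ₗ Δ =
      map LinearMap.id Δ ∘ₗ Δ := by
  have hmul := isDerivationAlong_mulLeft_uGen hsmul
  have hcoder l := isDerivationAlong_leibnizTensor (hmul l) (hmul l)
  refine UEnv.linearMap_ext hsmul (fun l => leibnizTensor _ _ (hmul l) (hcoder l)) ?_ ?_ ?_
  · simp [hΔ1]
  · intro l u
    simp only [LinearMap.comp_apply, LinearEquiv.coe_coe, hΔ, UEnv.coderivation]
    rw [map_leibnizTensor _ _ (hcoder l) (hmul l) (fun u => hΔ l u) (fun _ => rfl),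
      assoc_leibnizTensor]
  · intro l u
    simp only [LinearMap.comp_apply, hΔ, UEnv.coderivation]
    exact map_leibnizTensor _ _ (hmul l) (hcoder l) (fun _ => rfl) (fun u => hΔ l u) _

theorem UEnv.lid_counit (hΔ1 : Δ 1 = 1 ⊗ₜ 1)
    (hΔ : ∀ l u, Δ (uGen k R L ρ (0, l) * u) = UEnv.coderivation hsmul l (Δ u))
    {ε : UEnv k R L ρ →ₗ[R] R} (hε1 : ε 1 = 1)
    (hε : ∀ l u, ε (uGen k R L ρ (0, l) * u) = ρ l (ε u)) :
    (TensorProduct.lid R _).toLinearMap ∘ₗ map ε LinearMap.id ∘ₗ Δ = LinearMap.id := by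
  have hmul := isDerivationAlong_mulLeft_uGen hsmul
  have hρ l := (ρ l).isDerivationAlong
  refine UEnv.linearMap_ext hsmul (fun l => AddMonoidHom.mulLeft (uGen k R L ρ (0, l))) ?_ ?_
    fun _ _ => rfl
  · simp [hΔ1, hε1]
  · intro l u
    simp only [LinearMap.comp_apply, LinearEquiv.coe_coe, hΔ, UEnv.coderivation]
    rw [map_leibnizTensor _ _ (hρ l) (hmul l) (fun u => hε l u) (fun _ => rfl)]
    exact lid_leibnizTensor (hρ l) (hmul l) _

theorem UEnv.rid_counit (hΔ1 : Δ 1 = 1 ⊗ₜ 1)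
    (hΔ : ∀ l u, Δ (uGen k R L ρ (0, l) * u) = UEnv.coderivation hsmul l (Δ u))
    {ε : UEnv k R L ρ →ₗ[R] R} (hε1 : ε 1 = 1)
    (hε : ∀ l u, ε (uGen k R L ρ (0, l) * u) = ρ l (ε u)) :
    (TensorProduct.rid R _).toLinearMap ∘ₗ map LinearMap.id ε ∘ₗ Δ = LinearMap.id := by
  have hmul := isDerivationAlong_mulLeft_uGen hsmul
  have hρ l := (ρ l).isDerivationAlong
  refine UEnv.linearMap_ext hsmul (fun l => AddMonoidHom.mulLeft (uGen k R L ρ (0, l))) ?_ ?_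
    fun _ _ => rfl
  · simp [hΔ1, hε1]
  · intro l u
    simp only [LinearMap.comp_apply, LinearEquiv.coe_coe, hΔ, UEnv.coderivation]
    rw [map_leibnizTensor _ _ (hmul l) (hρ l) (fun _ => rfl) (fun u => hε l u)]
    exact rid_leibnizTensor (hρ l) (hmul l) _

end Coalgebra

theorem statement9
    [Module R (UEnv k R L ρ)]
    (hsmul : ∀ (r : R) (u : UEnv k R L ρ), r • u = uGen k R L ρ (r, 0) * u)
    (Δ : UEnv k R L ρ →ₗ[R] TensorProduct R (UEnv k R L ρ) (UEnv k R L ρ))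
    (hΔR : ∀ r : R, Δ (uGen k R L ρ (r, 0)) = uGen k R L ρ (r, 0) ⊗ₜ[R] 1)
    (δ : L → TensorProduct R (UEnv k R L ρ) (UEnv k R L ρ) →
      TensorProduct R (UEnv k R L ρ) (UEnv k R L ρ))
    (hδ_add : ∀ l x y, δ l (x + y) = δ l x + δ l y)
    (hδ_tmul : ∀ (l : L) (u v : UEnv k R L ρ),
      δ l (u ⊗ₜ[R] v) =
        (uGen k R L ρ (0, l) * u) ⊗ₜ[R] v + u ⊗ₜ[R] (uGen k R L ρ (0, l) * v))
    (hΔmul : ∀ (l : L) (u : UEnv k R L ρ),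
      Δ (uGen k R L ρ (0, l) * u) = δ l (Δ u))
    (act : UEnv k R L ρ →ₐ[k] Module.End k R)
    (hact : ∀ x : R × L,
      act (uGen k R L ρ x) = LinearMap.mulLeft k x.1 + (ρ x.2).toLinearMap)
    (ε : UEnv k R L ρ →ₗ[R] R)
    (hε : ∀ u, ε u = act u 1) :
    (∀ u, (TensorProduct.assoc R (UEnv k R L ρ) (UEnv k R L ρ) (UEnv k R L ρ))
        ((TensorProduct.map Δ LinearMap.id) (Δ u)) =
      (TensorProduct.map LinearMap.id Δ) (Δ u)) ∧
    (∀ u, (TensorProduct.lid R (UEnv k R L ρ))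
        ((TensorProduct.map ε LinearMap.id) (Δ u)) = u) ∧
    (∀ u, (TensorProduct.rid R (UEnv k R L ρ))
        ((TensorProduct.map LinearMap.id ε) (Δ u)) = u) := by
  have hΔ l u : Δ (uGen k R L ρ (0, l) * u) = UEnv.coderivation hsmul l (Δ u) :=
    (hΔmul l u).trans (eq_leibnizTensor _ _ (hδ_add l) (hδ_tmul l) _)
  have hΔ1 : Δ 1 = 1 ⊗ₜ 1 := by simpa [uGen_one] using hΔR 1
  have hε1 : ε 1 = 1 := by rw [hε, map_one act]; rfl
  have hεl l u : ε (uGen k R L ρ (0, l) * u) = ρ l (ε u) := by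
    simp [hε, hact]
  exact ⟨LinearMap.congr_fun (UEnv.coassoc hΔ1 hΔ),
    LinearMap.congr_fun (UEnv.lid_counit hΔ1 hΔ hε1 hεl),
    LinearMap.congr_fun (UEnv.rid_counit hΔ1 hΔ hε1 hεl)⟩
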